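/- Fix r ≥ 1, s ≥ 0, n = s + 1. Let 𝔸_a(Q,t) (1 ≤ a ≤ r) and Ω_i(Q,t) (0 ≤ i ≤ s) be n×n matrices with entries in ℂ[[Q^1,…,Q^r,t^0,…,t^s]] that pairwise commute and satisfy Q^b∂𝔸_a/∂Q^b = Q^a∂𝔸_b/∂Q^a, ∂Ω_i/∂t^j = ∂Ω_j/∂t^i, ∂𝔸_a/∂t^i = Q^a∂Ω_i/∂Q^a. Set p_a := 𝔸_a(0,0) and w_i := Ω_i(0,0), and let e_0 ∈ ℂ^n be a vector such that (w_0e_0, …, w_se_0) is a basis of ℂ^n. Let L ∈ M_n(ℂ((ħ^{-1}))[[Q,t]]) be the fundamental solution (ħ∂L/∂t^i + Ω_iL = 0, ħQ^a∂L/∂Q^a + 𝔸_aL − Lp_a = 0, L|_{Q=t=0} = Id), and define elements t̂^0,…,t̂^s of ℂ[[Q,t]] by requiring that the coefficient of ħ^{-1} in the column vector L^{-1}e_0 equals Σ_{i=0}^{s} t̂^i·(w_ie_0). Then: (a) the Jacobian matrix (∂t̂^i/∂t^j) is congruent to the identity modulo the ideal (Q,t), hence invertible over ℂ[[Q,t]];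 (b) Ω_j(Q,t)e_0 = Σ_{i=0}^{s} (∂t̂^i/∂t^j)·(w_ie_0) for every j; and (c) 𝔸_a(Q,t)e_0 = p_ae_0 + Σ_{i=0}^{s} Q^a(∂t̂^i/∂Q^a)·(w_ie_0) for every a. -/

import Mathlib

/-!
Since the connection matrices do not involve `ħ`, each equation `ħ θ_x L + A_x L - L A_x(0) = 0`
(`θ_x` the Euler derivative, `A_{Q^a} = 𝔸_a`, and `A_{t^j} = t^j Ω_j` after multiplying the
`t^j`-equation by `t^j`) determines every `Q,t`-coefficient of `L` in each `ħ`-degree from lower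
data, and induction gives `L ∈ Id + ħ⁻¹ ℂ[[ħ⁻¹]][[Q,t]]`. So `L` is invertible over
`ℂ[[ħ⁻¹]][[Q,t]]` and `J = L⁻¹ e₀ ≡ e₀` modulo `ħ⁻¹`. Differentiating `L J = e₀` gives
`θ_x J = ħ⁻¹ (L⁻¹ A_x e₀ - A_x(0) J)`, and comparing `ħ⁻¹`-coefficients yields
`A_x e₀ = A_x(0) e₀ + Σ_i θ_x t̂^i · w_i e₀`. For `x = Q^a` this is (c), for `x = t^j` it is `t^j`
times (b), and (a) is the constant term of (b) read in the basis `(w_i e₀)`.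
-/

noncomputable section

/-- `ℂ((ħ⁻¹))`, realized as formal Laurent series (Hahn series over `ℤ`) in the
variable `X = ħ⁻¹`; the coefficient of `ħ^k` is the coefficient at `z = -k`. -/
abbrev LH : Type := LaurentSeries ℂ

/-- The element `ħ = X⁻¹`: the Hahn series with single coefficient `1` in degree `-1`. -/
def hbar : LH := HahnSeries.single (-1 : ℤ) 1

/-- `f` lies in the subring `ℂ[ħ]` (no positive powers of the variable `X = ħ⁻¹`). -/
def InPolyH (f : LH) : Prop := ∀ z : ℤ, 0 < z → f.coeff z = 0

/-- `f` lies in the subring `ℂ[[ħ⁻¹]]`. -/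
def InPSinv (f : LH) : Prop := ∀ z : ℤ, z < 0 → f.coeff z = 0

/-- `f` lies in `ħ⁻¹ · ℂ[[ħ⁻¹]]` (only strictly negative powers of `ħ`). -/
def InPSinvPos (f : LH) : Prop := ∀ z : ℤ, z ≤ 0 → f.coeff z = 0

/-- `f` is a constant (a complex scalar), i.e. independent of `ħ`. -/
def IsConstL (f : LH) : Prop := ∀ z : ℤ, z ≠ 0 → f.coeff z = 0

section ops

variable {σ R : Type} [CommRing R] {n : ℕ}

/-- Formal partial derivative `∂/∂x` on multivariate formal power series. -/
def pd (x : σ) (f : MvPowerSeries σ R) : MvPowerSeries σ R :=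
  fun d => ((d x + 1 : ℕ) : R) * MvPowerSeries.coeff (R := R) (d + Finsupp.single x 1) f

/-- Euler derivative `x·∂/∂x` on multivariate formal power series. -/
def eulerD (x : σ) (f : MvPowerSeries σ R) : MvPowerSeries σ R :=
  fun d => ((d x : ℕ) : R) * MvPowerSeries.coeff (R := R) d f

/-- Entrywise partial derivative of a matrix of power series. -/
def mpd (x : σ) (M : Matrix (Fin n) (Fin n) (MvPowerSeries σ R)) :
    Matrix (Fin n) (Fin n) (MvPowerSeries σ R) := M.map (pd x)

/-- Entrywise Euler derivative of a matrix of power series. -/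
def meu (x : σ) (M : Matrix (Fin n) (Fin n) (MvPowerSeries σ R)) :
    Matrix (Fin n) (Fin n) (MvPowerSeries σ R) := M.map (eulerD x)

/-- A constant matrix, viewed as a matrix of power series. -/
def mC (M : Matrix (Fin n) (Fin n) R) : Matrix (Fin n) (Fin n) (MvPowerSeries σ R) :=
  M.map (MvPowerSeries.C (σ := σ) (R := R))

/-- Constant term (restriction to `Q = t = 0`) of a matrix of power series. -/
def m0 (M : Matrix (Fin n) (Fin n) (MvPowerSeries σ R)) : Matrix (Fin n) (Fin n) R :=
  M.map (MvPowerSeries.constantCoeff (σ := σ) (R := R))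

end ops

section lops

variable {σ : Type} {n : ℕ}

/-- The scalar `ħ` inside `ℂ((ħ⁻¹))[[Q,t]]`. -/
def hbarC (σ : Type) : MvPowerSeries σ LH := MvPowerSeries.C (σ := σ) (R := LH) hbar

/-- The entries of the matrix `M` lie in `ℂ[ħ][[Q,t]]`. -/
def MatPolyH (M : Matrix (Fin n) (Fin n) (MvPowerSeries σ LH)) : Prop :=
  ∀ (i j : Fin n) (d : σ →₀ ℕ), InPolyH (MvPowerSeries.coeff (R := LH) d (M i j))

/-- The entries of the matrix `M` lie in `ℂ[[Q,t]]`, i.e. are independent of `ħ`. -/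
def MatNoH (M : Matrix (Fin n) (Fin n) (MvPowerSeries σ LH)) : Prop :=
  ∀ (i j : Fin n) (d : σ →₀ ℕ), IsConstL (MvPowerSeries.coeff (R := LH) d (M i j))

/-- The first-order operator `v ↦ ħ·(x ∂/∂x)v + A·v` on column vectors. -/
def nablaE (x : σ) (A : Matrix (Fin n) (Fin n) (MvPowerSeries σ LH))
    (v : Fin n → MvPowerSeries σ LH) : Fin n → MvPowerSeries σ LH :=
  fun i => hbarC σ * eulerD x (v i) + A.mulVec v i

/-- The first-order operator `v ↦ ħ·(∂/∂x)v + A·v` on column vectors. -/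
def nablaP (x : σ) (A : Matrix (Fin n) (Fin n) (MvPowerSeries σ LH))
    (v : Fin n → MvPowerSeries σ LH) : Fin n → MvPowerSeries σ LH :=
  fun i => hbarC σ * pd x (v i) + A.mulVec v i

end lops

/-- The inclusion `ℂ[[Q,t]] → ℂ((ħ⁻¹))[[Q,t]]`, coefficientwise. -/
def psL {σ : Type} (f : MvPowerSeries σ ℂ) : MvPowerSeries σ LH :=
  fun d => HahnSeries.C (MvPowerSeries.coeff (R := ℂ) d f)

/-- The inclusion of matrices over `ℂ[[Q,t]]` into matrices over `ℂ((ħ⁻¹))[[Q,t]]`. -/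
def mL {σ : Type} {n : ℕ} (M : Matrix (Fin n) (Fin n) (MvPowerSeries σ ℂ)) :
    Matrix (Fin n) (Fin n) (MvPowerSeries σ LH) := M.map psL

/-- A complex matrix viewed as a constant matrix over `ℂ((ħ⁻¹))[[Q,t]]`. -/
def mCL {σ : Type} {n : ℕ} (M : Matrix (Fin n) (Fin n) ℂ) :
    Matrix (Fin n) (Fin n) (MvPowerSeries σ LH) :=
  M.map (fun c => MvPowerSeries.C (σ := σ) (R := LH) (HahnSeries.C c))


open MvPowerSeries Matrix
open scoped PowerSeries

theorem Derivation.comp_mulVec {R A : Type*} [CommRing R] [CommRing A] [Algebra R A]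
    {m : Type*} [Fintype m] (D : Derivation R A A) (M : Matrix m m A) (v : m → A) :
    D ∘ (M *ᵥ v) = M.map D *ᵥ v + M *ᵥ (D ∘ v) := by
  ext i
  simp only [Function.comp_apply, Matrix.mulVec, dotProduct, map_sum, Derivation.leibniz,
    smul_eq_mul, Pi.add_apply, Matrix.map_apply, ← Finset.sum_add_distrib]
  exact Finset.sum_congr rfl fun k _ => by ring

theorem RingHom.comp_mulVec {R S m : Type*} [CommRing R] [CommRing S] [Fintype m]
    [DecidableEq m] (f : R →+* S) (M : Matrix m m R) (v : m → R) :
    f ∘ (M *ᵥ v) = f.mapMatrix M *ᵥ (f ∘ v) :=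
  funext (f.map_mulVec M v)

theorem RingHom.mapMatrix_smul {R S m : Type*} [CommRing R] [CommRing S] [Fintype m]
    [DecidableEq m] (f : R →+* S) (c : R) (M : Matrix m m R) :
    f.mapMatrix (c • M) = f c • f.mapMatrix M :=
  Matrix.ext fun i k => map_mul f c (M i k)

theorem Int.forall_nonpos_of_step {P : ℤ → Prop} {b : ℤ} (hb : ∀ z < b, P z)
    (h : ∀ z ≤ 0, P (z - 1) → P z) : ∀ z ≤ 0, P z := by
  intro z hz
  have key : ∀ y, min (b - 1) z ≤ y → y ≤ 0 → P y := by
    intro y hy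
    induction y, hy using Int.leInduction with
    | base => exact fun _ => hb _ (by omega)
    | succ y hy ih => exact fun h0 => h (y + 1) h0 (by simpa using ih (by omega))
  exact key z (min_le_right _ _) hz

theorem HahnSeries.exists_forall_lt_coeff_eq_zero {R : Type*} [Zero R] {ι : Type*} [Finite ι]
    (f : ι → HahnSeries ℤ R) : ∃ b, ∀ z < b, ∀ i, (f i).coeff z = 0 := by
  obtain ⟨b, hb⟩ := (Set.finite_range fun i => (f i).order).bddBelow
  exact ⟨b, fun z hz i => HahnSeries.coeff_eq_zero_of_lt_order (hz.trans_le (hb ⟨i, rfl⟩))⟩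

section MvPowerSeriesMatrix

variable {σ R : Type} [CommRing R] {n : ℕ}

theorem pd_eq_pderiv (x : σ) (f : MvPowerSeries σ R) : pd x f = pderiv R x f := by
  ext d
  rw [coeff_pderiv, mul_comm]
  show ((d x + 1 : ℕ) : R) * _ = _
  push_cast
  rfl

def eulerDeriv (x : σ) : Derivation R (MvPowerSeries σ R) (MvPowerSeries σ R) :=
  (X x : MvPowerSeries σ R) • pderiv R x

theorem eulerD_eq_X_mul_pd (x : σ) (f : MvPowerSeries σ R) : eulerD x f = X x * pd x f := by
  classical
  ext d
  rw [X, coeff_monomial_mul, pd_eq_pderiv]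
  show ((d x : ℕ) : R) * _ = _
  split_ifs with h
  · have hx : 1 ≤ d x := Finsupp.single_le_iff.1 h
    rw [one_mul, coeff_pderiv, tsub_add_cancel_of_le h, Finsupp.tsub_apply,
      Finsupp.single_eq_same, ← Nat.cast_succ, Nat.succ_eq_add_one, Nat.sub_add_cancel hx,
      mul_comm]
  · have hx : d x = 0 := by
      by_contra hx
      exact h (Finsupp.single_le_iff.2 (Nat.one_le_iff_ne_zero.2 hx))
    rw [hx, Nat.cast_zero, zero_mul]

theorem eulerDeriv_apply (x : σ) (f : MvPowerSeries σ R) : eulerDeriv x f = eulerD x f := by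
  rw [eulerD_eq_X_mul_pd, pd_eq_pderiv]
  rfl

theorem eulerD_C (x : σ) (c : R) : eulerD x (C c) = 0 := by
  rw [← eulerDeriv_apply, eulerDeriv, Derivation.smul_apply, pderiv_C, smul_zero]

theorem eulerD_mul_C (x : σ) (f : MvPowerSeries σ R) (c : R) :
    eulerD x (f * C c) = eulerD x f * C c := by
  rw [← eulerDeriv_apply, ← eulerDeriv_apply, Derivation.leibniz, eulerDeriv_apply, eulerD_C,
    smul_zero, zero_add, smul_eq_mul, mul_comm]

theorem eulerD_sum_mul_C {ι : Type*} (x : σ) (s : Finset ι)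
    (f : ι → MvPowerSeries σ R) (c : ι → R) :
    eulerD x (∑ i ∈ s, f i * C (c i)) = ∑ i ∈ s, eulerD x (f i) * C (c i) := by
  rw [← eulerDeriv_apply, map_sum]
  simp only [eulerDeriv_apply, eulerD_mul_C]

theorem eulerD_map {S : Type} [CommRing S] (φ : R →+* S) (x : σ) (f : MvPowerSeries σ R) :
    eulerD x (map φ f) = map φ (eulerD x f) := by
  ext d
  show ((d x : ℕ) : S) * coeff d (map φ f) = _
  rw [coeff_map, coeff_map]
  show _ = φ (((d x : ℕ) : R) * _)
  rw [map_mul, map_natCast]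

theorem meu_eq_map (x : σ) (M : Matrix (Fin n) (Fin n) (MvPowerSeries σ R)) :
    meu x M = M.map (eulerDeriv x) :=
  Matrix.ext fun i k => (eulerDeriv_apply x (M i k)).symm

theorem meu_sub_one (x : σ) (L : Matrix (Fin n) (Fin n) (MvPowerSeries σ R)) :
    meu x (L - 1) = meu x L := by
  rw [meu_eq_map, meu_eq_map]
  refine Matrix.ext fun i k => ?_
  simp only [Matrix.map_apply, Matrix.sub_apply, Matrix.one_apply, map_sub, apply_ite,
    Derivation.map_one_eq_zero, ite_self, sub_zero]

theorem mC_mulVec_C (M : Matrix (Fin n) (Fin n) R) (e₀ : Fin n → R) :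
    mC (σ := σ) M *ᵥ (fun k => C (e₀ k)) = fun k => C ((M *ᵥ e₀) k) :=
  funext fun k => by simp only [mulVec, dotProduct, mC, Matrix.map_apply, map_sum, map_mul]

theorem isUnit_of_isUnit_m0 (M : Matrix (Fin n) (Fin n) (MvPowerSeries σ R)) (h : IsUnit (m0 M)) :
    IsUnit M := by
  rw [Matrix.isUnit_iff_isUnit_det, MvPowerSeries.isUnit_iff_constantCoeff, RingHom.map_det]
  exact (Matrix.isUnit_iff_isUnit_det _).1 h

end MvPowerSeriesMatrix

section LaurentCoefficients

variable {σ : Type} {n : ℕ}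

def hbarInvPart (f : MvPowerSeries σ LH) : MvPowerSeries σ ℂ := fun d => (coeff d f).coeff 1

theorem psL_C (c : ℂ) : psL (C c : MvPowerSeries σ ℂ) = C (HahnSeries.C c) :=
  map_C (HahnSeries.C : ℂ →+* LH) c

theorem psL_X_mul (x : σ) (f : MvPowerSeries σ ℂ) : psL (X x * f) = X x * psL f :=
  (map_mul (MvPowerSeries.map (HahnSeries.C : ℂ →+* LH)) _ _).trans (by rw [map_X]; rfl)

theorem mL_mC (A₀ : Matrix (Fin n) (Fin n) ℂ) : mL (σ := σ) (mC A₀) = mCL A₀ :=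
  Matrix.ext fun i k => psL_C (A₀ i k)

theorem mL_sub (A A' : Matrix (Fin n) (Fin n) (MvPowerSeries σ ℂ)) :
    mL (A - A') = mL A - mL A' :=
  Matrix.ext fun i k => map_sub (MvPowerSeries.map (HahnSeries.C : ℂ →+* LH)) (A i k) (A' i k)

theorem coeff_hbar_mul (y : LH) (z : ℤ) : (hbar * y).coeff z = y.coeff (z + 1) := by
  rw [hbar, HahnSeries.coeff_single_mul, one_mul, sub_neg_eq_add]

theorem coeff_coeff_eulerD (x : σ) (f : MvPowerSeries σ LH) (d : σ →₀ ℕ) (z : ℤ) :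
    (coeff d (eulerD x f)).coeff z = (d x : ℂ) * (coeff d f).coeff z := by
  rw [show coeff d (eulerD x f) = ((d x : ℕ) : LH) * coeff d f from rfl,
    ← map_natCast HahnSeries.C, HahnSeries.C_apply, HahnSeries.coeff_single_mul, sub_zero]

theorem hbarInvPart_eulerD (x : σ) (f : MvPowerSeries σ LH) :
    hbarInvPart (eulerD x f) = eulerD x (hbarInvPart f) := by
  ext d
  exact coeff_coeff_eulerD x f d 1

theorem coeff_coeff_psL_mul_eq_zero {f : MvPowerSeries σ ℂ} {g : MvPowerSeries σ LH}
    {d : σ →₀ ℕ} {z : ℤ} (h : ∀ d' ≤ d, (coeff d' g).coeff z = 0) :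
    (coeff d (psL f * g)).coeff z = 0 := by
  classical
  rw [coeff_mul, HahnSeries.coeff_sum]
  refine Finset.sum_eq_zero fun q hq => ?_
  rw [show coeff q.1 (psL f) = HahnSeries.C (coeff q.1 f) from rfl, HahnSeries.C_apply,
    HahnSeries.coeff_single_mul, sub_zero,
    h q.2 (Finset.HasAntidiagonal.mem_antidiagonal.1 hq ▸ le_add_self), mul_zero]

theorem coeff_coeff_mul_C_C (g : MvPowerSeries σ LH) (c : ℂ) (d : σ →₀ ℕ) (z : ℤ) :
    (coeff d (g * C (HahnSeries.C c))).coeff z = (coeff d g).coeff z * c := by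
  rw [coeff_mul_C, HahnSeries.C_apply, HahnSeries.coeff_mul_single, sub_zero]

theorem coeff_coeff_psL_of_ne_zero (f : MvPowerSeries σ ℂ) (d : σ →₀ ℕ) {z : ℤ} (hz : z ≠ 0) :
    (coeff d (psL f)).coeff z = 0 := by
  rw [show coeff d (psL f) = HahnSeries.C (coeff d f) from rfl, HahnSeries.C_apply,
    HahnSeries.coeff_single_of_ne hz]

end LaurentCoefficients

section HbarInvPowerSeries

variable (σ : Type) {n : ℕ}

-- `ℂ[[ħ⁻¹]][[Q,t]]` is modelled as `MvPowerSeries σ ℂ⟦X⟧` with `X = ħ⁻¹`.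
def toLH : MvPowerSeries σ ℂ⟦X⟧ →+* MvPowerSeries σ LH := map (HahnSeries.ofPowerSeries ℤ ℂ)

def evalHbarInvZero : MvPowerSeries σ ℂ⟦X⟧ →+* MvPowerSeries σ ℂ := map PowerSeries.constantCoeff

def constHbar : MvPowerSeries σ ℂ →+* MvPowerSeries σ ℂ⟦X⟧ := map PowerSeries.C

def hbarInv : MvPowerSeries σ ℂ⟦X⟧ := C PowerSeries.X

variable {σ}

theorem toLH_injective : Function.Injective (toLH σ) := fun f g h => by
  ext d : 1
  exact HahnSeries.ofPowerSeries_injective (by simpa [toLH, coeff_map] using congrArg (coeff d) h)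

theorem hbarC_mul_toLH_hbarInv : hbarC σ * toLH σ (hbarInv σ) = 1 := by
  rw [hbarC, toLH, hbarInv, map_C, HahnSeries.ofPowerSeries_X, ← map_mul, hbar,
    HahnSeries.single_mul_single, neg_add_cancel, mul_one, HahnSeries.single_zero_one, map_one]

theorem toLH_constHbar (f : MvPowerSeries σ ℂ) : toLH σ (constHbar σ f) = psL f := by
  ext d : 1
  rw [toLH, constHbar, coeff_map, coeff_map, HahnSeries.ofPowerSeries_C]
  rfl

theorem evalHbarInvZero_constHbar (f : MvPowerSeries σ ℂ) :
    evalHbarInvZero σ (constHbar σ f) = f := by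
  ext d
  rw [evalHbarInvZero, constHbar, coeff_map, coeff_map, PowerSeries.constantCoeff_C]

theorem toLH_eulerD (x : σ) (f : MvPowerSeries σ ℂ⟦X⟧) :
    toLH σ (eulerD x f) = eulerD x (toLH σ f) :=
  (eulerD_map _ x f).symm

theorem hbarInvPart_toLH_hbarInv_mul (f : MvPowerSeries σ ℂ⟦X⟧) :
    hbarInvPart (toLH σ (hbarInv σ * f)) = evalHbarInvZero σ f := by
  ext d
  show (coeff d (toLH σ (hbarInv σ * f))).coeff (1 : ℕ) = _
  rw [toLH, coeff_map, HahnSeries.ofPowerSeries_apply_coeff, hbarInv, coeff_C_mul,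
    PowerSeries.coeff_succ_X_mul, evalHbarInvZero, coeff_map,
    PowerSeries.coeff_zero_eq_constantCoeff]

theorem exists_toLH_eq (f : MvPowerSeries σ LH) (hf : ∀ d, InPSinvPos (coeff d f)) :
    ∃ g, toLH σ g = f ∧ evalHbarInvZero σ g = 0 := by
  let g : MvPowerSeries σ ℂ⟦X⟧ := fun d => PowerSeries.mk fun m => (coeff d f).coeff m
  have hg (d : σ →₀ ℕ) : coeff d g = PowerSeries.mk fun m => (coeff d f).coeff m := rfl
  refine ⟨g, ?_, ?_⟩
  · ext d z
    rw [toLH, coeff_map, PowerSeries.coeff_coe]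
    split_ifs with hz
    · exact (hf d z hz.le).symm
    · rw [hg, PowerSeries.coeff_mk, Int.natAbs_of_nonneg (not_lt.1 hz)]
  · ext d
    rw [evalHbarInvZero, coeff_map, ← PowerSeries.coeff_zero_eq_constantCoeff_apply, hg,
      PowerSeries.coeff_mk, map_zero]
    exact hf d 0 le_rfl

theorem toLH_mapMatrix_constHbar (A : Matrix (Fin n) (Fin n) (MvPowerSeries σ ℂ)) :
    (toLH σ).mapMatrix ((constHbar σ).mapMatrix A) = mL A :=
  Matrix.ext fun i k => toLH_constHbar (A i k)

theorem isUnit_det_of_evalHbarInvZero_eq_one (L : Matrix (Fin n) (Fin n) (MvPowerSeries σ ℂ⟦X⟧))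
    (hL0 : (evalHbarInvZero σ).mapMatrix L = 1) : IsUnit L.det := by
  have h00 : m0 (m0 L) = 1 := by
    change constantCoeff.mapMatrix ((evalHbarInvZero σ).mapMatrix L) = 1
    rw [hL0, map_one]
  exact (Matrix.isUnit_iff_isUnit_det _).1
    (isUnit_of_isUnit_m0 _ (isUnit_of_isUnit_m0 _ (h00 ▸ isUnit_one)))

end HbarInvPowerSeries

section FundamentalSolution

variable {σ : Type} {n : ℕ}

/- Taking the coefficient of `Q^d X^{z-1}` (`X = ħ⁻¹`, `d x ≠ 0`), the equation reads
`(d x) N_d[z] = 0` as soon as every `N_{d'}` with `d' ≤ d` vanishes in degree `z - 1 < 0`: induct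
on `d`, and for fixed `d` climb in `z` from below the order of `N_d`. -/
theorem coeff_coeff_eq_zero_of_euler (N : Matrix (Fin n) (Fin n) (MvPowerSeries σ LH))
    (hN0 : m0 N = 0) (A F : σ → Matrix (Fin n) (Fin n) (MvPowerSeries σ ℂ))
    (A₀ : σ → Matrix (Fin n) (Fin n) ℂ)
    (hN : ∀ x, hbarC σ • meu x N + mL (A x) * N - N * mCL (A₀ x) + mL (F x) = 0)
    (d : σ →₀ ℕ) : ∀ z ≤ 0, ∀ i k, (coeff d (N i k)).coeff z = 0 := by
  induction d using WellFoundedLT.induction with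
  | ind d ih =>
  by_cases hd : d = 0
  · intro z _ i k
    rw [hd, coeff_zero_eq_constantCoeff_apply, show constantCoeff (N i k) = m0 N i k from rfl,
      hN0, Matrix.zero_apply, HahnSeries.coeff_zero]
  obtain ⟨x, hx⟩ : ∃ x, d x ≠ 0 := by simpa [Finsupp.ext_iff] using hd
  obtain ⟨b, hb⟩ := HahnSeries.exists_forall_lt_coeff_eq_zero fun ik : Fin n × Fin n =>
    coeff d (N ik.1 ik.2)
  refine Int.forall_nonpos_of_step (fun z hz i k => hb z hz (i, k)) fun z hz hprev i k => ?_
  have hlow : ∀ d' ≤ d, ∀ i k, (coeff d' (N i k)).coeff (z - 1) = 0 := fun d' hd' =>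
    hd'.lt_or_eq.elim (fun hlt => ih d' hlt (z - 1) (by omega)) (· ▸ hprev)
  have hE := congrArg (fun M => (coeff d (M i k)).coeff (z - 1)) (hN x)
  simp only [Matrix.add_apply, Matrix.sub_apply, Matrix.smul_apply, Matrix.mul_apply, meu, mL,
    mCL, Matrix.map_apply, smul_eq_mul, hbarC, map_add, map_sub, map_sum, coeff_C_mul,
    HahnSeries.coeff_add, HahnSeries.coeff_sub, HahnSeries.coeff_sum, coeff_hbar_mul,
    coeff_coeff_psL_mul_eq_zero (hlow · · _ k), coeff_coeff_mul_C_C, hlow d le_rfl,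
    coeff_coeff_psL_of_ne_zero _ _ (show z - 1 ≠ 0 by omega), zero_mul, Finset.sum_const_zero,
    sub_zero, add_zero, sub_add_cancel, Matrix.zero_apply, map_zero, HahnSeries.coeff_zero] at hE
  rw [coeff_coeff_eulerD] at hE
  exact (mul_eq_zero.1 hE).resolve_left (Nat.cast_ne_zero.2 hx)

theorem exists_lift_of_euler (L : Matrix (Fin n) (Fin n) (MvPowerSeries σ LH)) (hL0 : m0 L = 1)
    (A : σ → Matrix (Fin n) (Fin n) (MvPowerSeries σ ℂ)) (A₀ : σ → Matrix (Fin n) (Fin n) ℂ)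
    (hL : ∀ x, hbarC σ • meu x L + mL (A x) * L - L * mCL (A₀ x) = 0) :
    ∃ L' : Matrix (Fin n) (Fin n) (MvPowerSeries σ ℂ⟦X⟧),
      (toLH σ).mapMatrix L' = L ∧ (evalHbarInvZero σ).mapMatrix L' = 1 := by
  have hN0 : m0 (L - 1) = 0 := by
    show constantCoeff.mapMatrix (L - 1) = 0
    rw [map_sub, map_one, sub_eq_zero]
    exact hL0
  have hN (x : σ) : hbarC σ • meu x (L - 1) + mL (A x) * (L - 1) - (L - 1) * mCL (A₀ x)
      + mL (A x - mC (A₀ x)) = 0 := by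
    rw [meu_sub_one, mL_sub, mL_mC, ← hL x, mul_sub, sub_mul, mul_one, one_mul]
    abel
  choose g hg using fun i k => exists_toLH_eq ((L - 1) i k) fun d z hz =>
    coeff_coeff_eq_zero_of_euler (L - 1) hN0 A _ A₀ hN d z hz i k
  refine ⟨1 + Matrix.of g, ?_, ?_⟩
  · rw [map_add, map_one, add_comm, ← eq_sub_iff_add_eq]
    exact Matrix.ext fun i k => (hg i k).1
  · rw [map_add, map_one, add_eq_left]
    exact Matrix.ext fun i k => (hg i k).2

theorem meu_eq_hbarInv_smul (L : Matrix (Fin n) (Fin n) (MvPowerSeries σ ℂ⟦X⟧))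
    (A : Matrix (Fin n) (Fin n) (MvPowerSeries σ ℂ)) (A₀ : Matrix (Fin n) (Fin n) ℂ) (x : σ)
    (hL : hbarC σ • meu x ((toLH σ).mapMatrix L) + mL A * (toLH σ).mapMatrix L
      - (toLH σ).mapMatrix L * mCL A₀ = 0) :
    meu x L = hbarInv σ •
      (L * (constHbar σ).mapMatrix (mC A₀) - (constHbar σ).mapMatrix A * L) := by
  apply Matrix.map_injective (toLH_injective (σ := σ))
  change (toLH σ).mapMatrix (meu x L) = (toLH σ).mapMatrix (hbarInv σ • _)
  have hmeu : (toLH σ).mapMatrix (meu x L) = meu x ((toLH σ).mapMatrix L) :=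
    Matrix.ext fun i k => toLH_eulerD x (L i k)
  have h1 : hbarC σ • meu x ((toLH σ).mapMatrix L) =
      (toLH σ).mapMatrix L * mCL A₀ - mL A * (toLH σ).mapMatrix L := by
    rw [← sub_eq_zero, ← hL]
    abel
  rw [RingHom.mapMatrix_smul, map_sub, map_mul, map_mul, toLH_mapMatrix_constHbar,
    toLH_mapMatrix_constHbar, mL_mC, ← h1, smul_smul, mul_comm, hbarC_mul_toLH_hbarInv, one_smul,
    hmeu]

theorem eulerD_hbarInvPart_toLH_inv_mulVec (L : Matrix (Fin n) (Fin n) (MvPowerSeries σ ℂ⟦X⟧))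
    (hL0 : (evalHbarInvZero σ).mapMatrix L = 1) (A : Matrix (Fin n) (Fin n) (MvPowerSeries σ ℂ))
    (A₀ : Matrix (Fin n) (Fin n) ℂ) (x : σ)
    (hL : meu x L = hbarInv σ •
      (L * (constHbar σ).mapMatrix (mC A₀) - (constHbar σ).mapMatrix A * L))
    (e₀ : Fin n → ℂ) :
    eulerD x ∘ hbarInvPart ∘ toLH σ ∘ (L⁻¹ *ᵥ fun k => constHbar σ (C (e₀ k))) =
      A *ᵥ (fun k => C (e₀ k)) - mC A₀ *ᵥ (fun k => C (e₀ k)) := by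
  set v : Fin n → MvPowerSeries σ ℂ⟦X⟧ := fun k => constHbar σ (C (e₀ k))
  set J := L⁻¹ *ᵥ v
  have hunit := isUnit_det_of_evalHbarInvZero_eq_one L hL0
  have hLJ : L *ᵥ J = v := by rw [mulVec_mulVec, mul_nonsing_inv _ hunit, one_mulVec]
  have hv : eulerD x ∘ v = 0 := funext fun k => by
    simp only [v, Function.comp_apply, constHbar, map_C, eulerD_C, Pi.zero_apply]
  -- `θ J` is divisible by `ħ⁻¹`, so its `ħ⁻¹`-coefficient is the quotient at `ħ⁻¹ = 0`.
  have hθJ : eulerD x ∘ J = hbarInv σ •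
      (L⁻¹ *ᵥ ((constHbar σ).mapMatrix A *ᵥ v) - (constHbar σ).mapMatrix (mC A₀) *ᵥ J) := by
    have hleib := (eulerDeriv x).comp_mulVec L J
    rw [funext (eulerDeriv_apply x), hLJ, hv] at hleib
    have hLθJ : L *ᵥ (eulerD x ∘ J) = hbarInv σ •
        ((constHbar σ).mapMatrix A *ᵥ v - L *ᵥ ((constHbar σ).mapMatrix (mC A₀) *ᵥ J)) := by
      rw [eq_neg_of_add_eq_zero_right hleib.symm, show L.map (eulerD x) = meu x L from rfl, hL,
        smul_mulVec, sub_mulVec, ← mulVec_mulVec, ← mulVec_mulVec, hLJ, ← smul_neg, neg_sub]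
    rw [← one_mulVec (eulerD x ∘ J), ← nonsing_inv_mul _ hunit, ← mulVec_mulVec, hLθJ,
      mulVec_smul, mulVec_sub, mulVec_mulVec _ L⁻¹ L, nonsing_inv_mul _ hunit, one_mulVec]
  have hεinv : (evalHbarInvZero σ).mapMatrix L⁻¹ = 1 := by
    have h := congrArg (evalHbarInvZero σ).mapMatrix (nonsing_inv_mul L hunit)
    rwa [map_mul, hL0, mul_one, map_one] at h
  have hεκ (M : Matrix (Fin n) (Fin n) (MvPowerSeries σ ℂ)) :
      (evalHbarInvZero σ).mapMatrix ((constHbar σ).mapMatrix M) = M :=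
    Matrix.ext fun i k => evalHbarInvZero_constHbar (M i k)
  have hεv : evalHbarInvZero σ ∘ v = fun k => C (e₀ k) :=
    funext fun k => evalHbarInvZero_constHbar _
  have hεJ : evalHbarInvZero σ ∘ J = fun k => C (e₀ k) := by
    rw [RingHom.comp_mulVec, hεinv, hεv, one_mulVec]
  calc eulerD x ∘ hbarInvPart ∘ toLH σ ∘ J = hbarInvPart ∘ toLH σ ∘ (eulerD x ∘ J) :=
        funext fun k => by
          simp only [Function.comp_apply, toLH_eulerD, hbarInvPart_eulerD]
    _ = evalHbarInvZero σ ∘ (L⁻¹ *ᵥ ((constHbar σ).mapMatrix A *ᵥ v)) -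
          evalHbarInvZero σ ∘ ((constHbar σ).mapMatrix (mC A₀) *ᵥ J) := by
        rw [hθJ]
        exact funext fun k => (hbarInvPart_toLH_hbarInv_mul _).trans (map_sub _ _ _)
    _ = A *ᵥ (fun k => C (e₀ k)) - mC A₀ *ᵥ (fun k => C (e₀ k)) := by
        rw [RingHom.comp_mulVec, RingHom.comp_mulVec, RingHom.comp_mulVec, hεinv, hεκ, hεκ, hεv,
          hεJ, one_mulVec]

theorem mulVec_C_eq_add_eulerD_hbarInvPart (L : Matrix (Fin n) (Fin n) (MvPowerSeries σ LH))
    (hL0 : m0 L = 1) (A : σ → Matrix (Fin n) (Fin n) (MvPowerSeries σ ℂ))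
    (A₀ : σ → Matrix (Fin n) (Fin n) ℂ)
    (hL : ∀ x, hbarC σ • meu x L + mL (A x) * L - L * mCL (A₀ x) = 0) (e₀ : Fin n → ℂ) (x : σ) :
    A x *ᵥ (fun k => C (e₀ k)) = mC (A₀ x) *ᵥ (fun k => C (e₀ k)) +
      eulerD x ∘ hbarInvPart ∘ (L⁻¹ *ᵥ fun k => C (HahnSeries.C (e₀ k))) := by
  obtain ⟨L', rfl, hL'0⟩ := exists_lift_of_euler L hL0 A A₀ hL
  have hunit := isUnit_det_of_evalHbarInvZero_eq_one L' hL'0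
  have hinv : ((toLH σ).mapMatrix L')⁻¹ = (toLH σ).mapMatrix L'⁻¹ :=
    inv_eq_left_inv (by rw [← map_mul, nonsing_inv_mul _ hunit, map_one])
  have he : (fun k => C (HahnSeries.C (e₀ k))) = toLH σ ∘ fun k => constHbar σ (C (e₀ k)) :=
    funext fun k => by rw [Function.comp_apply, toLH_constHbar, psL_C]
  rw [hinv, he, ← RingHom.comp_mulVec]
  exact eq_add_of_sub_eq' (eulerD_hbarInvPart_toLH_inv_mulVec L' hL'0 (A x) (A₀ x) x
    (meu_eq_hbarInv_smul L' (A x) (A₀ x) x (hL x)) e₀).symm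

theorem mulVec_C_eq_add_sum_eulerD (L : Matrix (Fin n) (Fin n) (MvPowerSeries σ LH))
    (hL0 : m0 L = 1) (A : σ → Matrix (Fin n) (Fin n) (MvPowerSeries σ ℂ))
    (A₀ : σ → Matrix (Fin n) (Fin n) ℂ)
    (hL : ∀ x, hbarC σ • meu x L + mL (A x) * L - L * mCL (A₀ x) = 0) (e₀ : Fin n → ℂ)
    {m : ℕ} (t : Fin m → MvPowerSeries σ ℂ) (v : Fin m → Fin n → ℂ)
    (ht : ∀ k d, (coeff d ((L⁻¹ *ᵥ fun k => C (HahnSeries.C (e₀ k))) k)).coeff 1 =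
      ∑ i, coeff d (t i) * v i k) (x : σ) :
    A x *ᵥ (fun k => C (e₀ k)) = fun k => C ((A₀ x *ᵥ e₀) k) + ∑ i, eulerD x (t i) * C (v i k) := by
  have hJ : hbarInvPart ∘ (L⁻¹ *ᵥ fun k => C (HahnSeries.C (e₀ k))) =
      fun k => ∑ i, t i * C (v i k) := funext fun k => by
    ext d
    rw [Function.comp_apply, map_sum]
    simp only [coeff_mul_C]
    exact ht k d
  rw [mulVec_C_eq_add_eulerD_hbarInvPart L hL0 A A₀ hL e₀ x, hJ, mC_mulVec_C]
  funext k
  rw [Pi.add_apply, Function.comp_apply, eulerD_sum_mul_C]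

theorem euler_form_of_mpd (L : Matrix (Fin n) (Fin n) (MvPowerSeries σ LH))
    (Ω : Matrix (Fin n) (Fin n) (MvPowerSeries σ ℂ)) (x : σ)
    (h : hbarC σ • mpd x L + mL Ω * L = 0) :
    hbarC σ • meu x L + mL ((X x : MvPowerSeries σ ℂ) • Ω) * L - L * mCL 0 = 0 := by
  refine Matrix.ext fun i k => ?_
  have hik := congrFun (congrFun h i) k
  simp only [Matrix.add_apply, Matrix.sub_apply, Matrix.smul_apply, Matrix.mul_apply, mpd, meu,
    mL, mCL, Matrix.map_apply, Matrix.zero_apply, smul_eq_mul, eulerD_eq_X_mul_pd, map_zero,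
    psL_X_mul, mul_zero, Finset.sum_const_zero, sub_zero] at hik ⊢
  simp only [mul_assoc, ← Finset.mul_sum]
  linear_combination (X x : MvPowerSeries σ LH) * hik

theorem mulVec_C_eq_sum_pd_of_X_smul (Ω : Matrix (Fin n) (Fin n) (MvPowerSeries σ ℂ)) (x : σ)
    (e₀ : Fin n → ℂ) {m : ℕ} (t : Fin m → MvPowerSeries σ ℂ) (v : Fin m → Fin n → ℂ)
    (h : ((X x : MvPowerSeries σ ℂ) • Ω) *ᵥ (fun k => C (e₀ k)) =
      fun k => C (((0 : Matrix (Fin n) (Fin n) ℂ) *ᵥ e₀) k) + ∑ i, eulerD x (t i) * C (v i k)) :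
    Ω *ᵥ (fun k => C (e₀ k)) = fun k => ∑ i, pd x (t i) * C (v i k) := by
  funext k
  refine mul_left_cancel₀ (nonZeroDivisors.ne_zero (X_mem_nonzeroDivisors (i := x))) ?_
  have hk := congrFun h k
  simp only [smul_mulVec, Pi.smul_apply, smul_eq_mul, zero_mulVec, Pi.zero_apply, map_zero,
    zero_add] at hk
  simp only [hk, Finset.mul_sum, eulerD_eq_X_mul_pd, mul_assoc]

theorem m0_eq_one_of_mulVec_eq (Ω : Fin n → Matrix (Fin n) (Fin n) (MvPowerSeries σ ℂ))
    (w : Fin n → Matrix (Fin n) (Fin n) ℂ) (hw : ∀ i, m0 (Ω i) = w i) (e₀ : Fin n → ℂ)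
    (hLI : LinearIndependent ℂ fun i => w i *ᵥ e₀)
    (D : Matrix (Fin n) (Fin n) (MvPowerSeries σ ℂ))
    (h : ∀ j, Ω j *ᵥ (fun k => C (e₀ k)) = fun k => ∑ i, D i j * C ((w i *ᵥ e₀) k)) :
    m0 D = 1 := by
  refine Matrix.ext fun i j => ?_
  have hj : w j *ᵥ e₀ = ∑ i, m0 D i j • (w i *ᵥ e₀) := by
    have h0 := congrArg (constantCoeff ∘ ·) (h j)
    change constantCoeff ∘ (Ω j *ᵥ _) = _ at h0
    rw [RingHom.comp_mulVec] at h0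
    change m0 (Ω j) *ᵥ _ = _ at h0
    rw [hw] at h0
    funext k
    simpa [Finset.sum_apply, Function.comp_def, m0] using congrFun h0 k
  have hcoord := Fintype.linearIndependent_iff.1 hLI (fun i => m0 D i j - (1 : Matrix _ _ ℂ) i j)
    (by simp [sub_smul, Finset.sum_sub_distrib, ← hj, Matrix.one_apply]) i
  exact sub_eq_zero.1 hcoord

end FundamentalSolution

theorem statement6_general (r s : ℕ)
    (𝔸 : Fin r → Matrix (Fin (s + 1)) (Fin (s + 1)) (MvPowerSeries (Fin r ⊕ Fin (s + 1)) ℂ))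
    (Ω : Fin (s + 1) → Matrix (Fin (s + 1)) (Fin (s + 1)) (MvPowerSeries (Fin r ⊕ Fin (s + 1)) ℂ))
    -- `p_a := 𝔸_a(0,0)`, `w_i := Ω_i(0,0)`
    (p : Fin r → Matrix (Fin (s + 1)) (Fin (s + 1)) ℂ)
    (w : Fin (s + 1) → Matrix (Fin (s + 1)) (Fin (s + 1)) ℂ) (hwdef : ∀ i, m0 (Ω i) = w i)
    -- `(w_0 e₀, …, w_s e₀)` is a basis of `ℂ^n`
    (e₀ : Fin (s + 1) → ℂ)
    (hbLI : LinearIndependent ℂ (fun i => (w i).mulVec e₀))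
    -- `L` is the normalized fundamental solution
    (L : Matrix (Fin (s + 1)) (Fin (s + 1)) (MvPowerSeries (Fin r ⊕ Fin (s + 1)) LH))
    (hLt : ∀ i, hbarC (Fin r ⊕ Fin (s + 1)) • mpd (Sum.inr i) L + mL (Ω i) * L = 0)
    (hLq : ∀ a, hbarC (Fin r ⊕ Fin (s + 1)) • meu (Sum.inl a) L + mL (𝔸 a) * L
                  - L * mCL (p a) = 0)
    (hL0 : m0 L = 1)
    -- `t̂^0, …, t̂^s` are defined by: the coefficient of `ħ⁻¹` in `L⁻¹ e₀` equals
    -- `Σ_i t̂^i · (w_i e₀)`  (the coefficient of `ħ⁻¹` is the Hahn coefficient at `z = 1`)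
    (that : Fin (s + 1) → MvPowerSeries (Fin r ⊕ Fin (s + 1)) ℂ)
    (hthat : ∀ (j : Fin (s + 1)) (d : (Fin r ⊕ Fin (s + 1)) →₀ ℕ),
      (MvPowerSeries.coeff (R := LH) d
        ((L⁻¹.mulVec (fun k => MvPowerSeries.C (σ := Fin r ⊕ Fin (s + 1)) (R := LH)
            (HahnSeries.C (e₀ k)))) j)).coeff 1
        = ∑ i, MvPowerSeries.coeff (R := ℂ) d (that i) * ((w i).mulVec e₀ j)) :
    -- (a) the Jacobian `(∂t̂^i/∂t^j)` is `Id` modulo `(Q,t)` and invertible over `ℂ[[Q,t]]`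
    (m0 (Matrix.of fun i j => pd (Sum.inr j) (that i)) = 1 ∧
      IsUnit (Matrix.of fun i j => pd (Sum.inr j) (that i))) ∧
    -- (b) `Ω_j e₀ = Σ_i (∂t̂^i/∂t^j)·(w_i e₀)`
    (∀ j, (Ω j).mulVec (fun k => MvPowerSeries.C (σ := Fin r ⊕ Fin (s + 1)) (R := ℂ) (e₀ k))
        = fun k => ∑ i, pd (Sum.inr j) (that i)
            * MvPowerSeries.C (σ := Fin r ⊕ Fin (s + 1)) (R := ℂ) ((w i).mulVec e₀ k)) ∧
    -- (c) `𝔸_a e₀ = p_a e₀ + Σ_i Q^a (∂t̂^i/∂Q^a)·(w_i e₀)`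
    (∀ a, (𝔸 a).mulVec (fun k => MvPowerSeries.C (σ := Fin r ⊕ Fin (s + 1)) (R := ℂ) (e₀ k))
        = fun k => MvPowerSeries.C (σ := Fin r ⊕ Fin (s + 1)) (R := ℂ) ((p a).mulVec e₀ k)
            + ∑ i, eulerD (Sum.inl a) (that i)
                * MvPowerSeries.C (σ := Fin r ⊕ Fin (s + 1)) (R := ℂ) ((w i).mulVec e₀ k)) := by
  set A : Fin r ⊕ Fin (s + 1) → Matrix (Fin (s + 1)) (Fin (s + 1))
      (MvPowerSeries (Fin r ⊕ Fin (s + 1)) ℂ) :=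
    Sum.elim 𝔸 fun j => (X (Sum.inr j) : MvPowerSeries (Fin r ⊕ Fin (s + 1)) ℂ) • Ω j
  set A₀ : Fin r ⊕ Fin (s + 1) → Matrix (Fin (s + 1)) (Fin (s + 1)) ℂ := Sum.elim p 0
  have hL (x : Fin r ⊕ Fin (s + 1)) :
      hbarC (Fin r ⊕ Fin (s + 1)) • meu x L + mL (A x) * L - L * mCL (A₀ x) = 0 := by
    rcases x with a | j
    · exact hLq a
    · exact euler_form_of_mpd L (Ω j) _ (hLt j)
  have key := mulVec_C_eq_add_sum_eulerD L hL0 A A₀ hL e₀ that (fun i => (w i).mulVec e₀) hthat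
  have partB (j : Fin (s + 1)) := mulVec_C_eq_sum_pd_of_X_smul (Ω j) (Sum.inr j) e₀ that _
    (key (Sum.inr j))
  have hJac := m0_eq_one_of_mulVec_eq Ω w hwdef e₀ hbLI _ partB
  exact ⟨⟨hJac, isUnit_of_isUnit_m0 _ (hJac ▸ isUnit_one)⟩, partB, fun a => key (Sum.inl a)⟩

/-- flat coordinates from the `ħ⁻¹`-expansion of the `J`-function
`J = L⁻¹e₀` of a big abstract quantum D-module in a canonical frame. -/
theorem statement6 (r s : ℕ) (hr : 1 ≤ r)
    (𝔸 : Fin r → Matrix (Fin (s + 1)) (Fin (s + 1)) (MvPowerSeries (Fin r ⊕ Fin (s + 1)) ℂ))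
    (Ω : Fin (s + 1) → Matrix (Fin (s + 1)) (Fin (s + 1)) (MvPowerSeries (Fin r ⊕ Fin (s + 1)) ℂ))
    -- the (ħ-independent) connection matrices pairwise commute and are integrable
    (hAA : ∀ a b, 𝔸 a * 𝔸 b = 𝔸 b * 𝔸 a)
    (hAO : ∀ a i, 𝔸 a * Ω i = Ω i * 𝔸 a)
    (hOO : ∀ i j, Ω i * Ω j = Ω j * Ω i)
    (hiQQ : ∀ a b, meu (Sum.inl b) (𝔸 a) = meu (Sum.inl a) (𝔸 b))
    (hiTT : ∀ i j, mpd (Sum.inr j) (Ω i) = mpd (Sum.inr i) (Ω j))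
    (hiQT : ∀ a i, mpd (Sum.inr i) (𝔸 a) = meu (Sum.inl a) (Ω i))
    -- `p_a := 𝔸_a(0,0)`, `w_i := Ω_i(0,0)`
    (p : Fin r → Matrix (Fin (s + 1)) (Fin (s + 1)) ℂ) (hpdef : ∀ a, m0 (𝔸 a) = p a)
    (w : Fin (s + 1) → Matrix (Fin (s + 1)) (Fin (s + 1)) ℂ) (hwdef : ∀ i, m0 (Ω i) = w i)
    -- `(w_0 e₀, …, w_s e₀)` is a basis of `ℂ^n`
    (e₀ : Fin (s + 1) → ℂ)
    (hbLI : LinearIndependent ℂ (fun i => (w i).mulVec e₀))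
    (hbSpan : Submodule.span ℂ (Set.range (fun i => (w i).mulVec e₀)) = ⊤)
    -- `L` is the normalized fundamental solution
    (L : Matrix (Fin (s + 1)) (Fin (s + 1)) (MvPowerSeries (Fin r ⊕ Fin (s + 1)) LH))
    (hLt : ∀ i, hbarC (Fin r ⊕ Fin (s + 1)) • mpd (Sum.inr i) L + mL (Ω i) * L = 0)
    (hLq : ∀ a, hbarC (Fin r ⊕ Fin (s + 1)) • meu (Sum.inl a) L + mL (𝔸 a) * L
                  - L * mCL (p a) = 0)
    (hL0 : m0 L = 1)
    -- `t̂^0, …, t̂^s` are defined by: the coefficient of `ħ⁻¹` in `L⁻¹ e₀` equals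
    -- `Σ_i t̂^i · (w_i e₀)`  (the coefficient of `ħ⁻¹` is the Hahn coefficient at `z = 1`)
    (that : Fin (s + 1) → MvPowerSeries (Fin r ⊕ Fin (s + 1)) ℂ)
    (hthat : ∀ (j : Fin (s + 1)) (d : (Fin r ⊕ Fin (s + 1)) →₀ ℕ),
      (MvPowerSeries.coeff (R := LH) d
        ((L⁻¹.mulVec (fun k => MvPowerSeries.C (σ := Fin r ⊕ Fin (s + 1)) (R := LH)
            (HahnSeries.C (e₀ k)))) j)).coeff 1
        = ∑ i, MvPowerSeries.coeff (R := ℂ) d (that i) * ((w i).mulVec e₀ j)) :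
    -- (a) the Jacobian `(∂t̂^i/∂t^j)` is `Id` modulo `(Q,t)` and invertible over `ℂ[[Q,t]]`
    (m0 (Matrix.of fun i j => pd (Sum.inr j) (that i)) = 1 ∧
      IsUnit (Matrix.of fun i j => pd (Sum.inr j) (that i))) ∧
    -- (b) `Ω_j e₀ = Σ_i (∂t̂^i/∂t^j)·(w_i e₀)`
    (∀ j, (Ω j).mulVec (fun k => MvPowerSeries.C (σ := Fin r ⊕ Fin (s + 1)) (R := ℂ) (e₀ k))
        = fun k => ∑ i, pd (Sum.inr j) (that i)
            * MvPowerSeries.C (σ := Fin r ⊕ Fin (s + 1)) (R := ℂ) ((w i).mulVec e₀ k)) ∧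
    -- (c) `𝔸_a e₀ = p_a e₀ + Σ_i Q^a (∂t̂^i/∂Q^a)·(w_i e₀)`
    (∀ a, (𝔸 a).mulVec (fun k => MvPowerSeries.C (σ := Fin r ⊕ Fin (s + 1)) (R := ℂ) (e₀ k))
        = fun k => MvPowerSeries.C (σ := Fin r ⊕ Fin (s + 1)) (R := ℂ) ((p a).mulVec e₀ k)
            + ∑ i, eulerD (Sum.inl a) (that i)
                * MvPowerSeries.C (σ := Fin r ⊕ Fin (s + 1)) (R := ℂ) ((w i).mulVec e₀ k)) :=
  statement6_general r s 𝔸 Ω p w hwdef e₀ hbLI L hLt hLq hL0 that hthat
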